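/- arXiv:1702.05992 — 4 statements merged into one kernel-verified Lean document; each statement's English description precedes it below -/
import Mathlib

section
/- Let (ν_x̄) be a family of m probability measures on a finite set X with invertible Gram matrix Γ (with respect to ⟨ν,ρ⟩* = Σ_x ν(x)ρ(x)/μ(x)). If μ is a convex combination of the ν_x̄, then Trace(Γ⁻¹) ≥ 1, with equality if and only if the ν_x̄ are pairwise orthogonal. -/
/-!
Write `V` for the matrix with rows `ν a`. Then `Γ = V diag(μ)⁻¹ Vᵀ` is positive semidefinite,
hence positive definite, and `Vᵀ α = μ` gives `Γ α = 𝟙`. As `Γ` has nonnegative entries,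
`Γ a a * α a ≤ (Γ α) a = 1`, while nonnegativity of the quadratic form of `Γ` at
`Γ a a • Γ⁻¹ eₐ - eₐ` gives `1 ≤ Γ a a * Γ⁻¹ a a`. Hence `α a ≤ Γ⁻¹ a a` and
`1 = ∑ α ≤ trace Γ⁻¹`. In the equality case `Γ a a * α a = 1 = (Γ α) a` for every `a`, so the
nonnegative off-diagonal terms `Γ a b * α b` vanish, and `α b > 0` makes `Γ` diagonal.
-/
open Finset Matrix

namespace Matrix

variable {ι : Type*} [Fintype ι]

theorem PosDef.one_le_mul_inv_apply_self [DecidableEq ι] {A : Matrix ι ι ℝ} (hA : A.PosDef)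
    (a : ι) : 1 ≤ A a a * A⁻¹ a a := by
  set e : ι → ℝ := Pi.single a 1
  set w := A⁻¹ *ᵥ e
  have hAw : A *ᵥ w = e := by
    rw [mulVec_mulVec, mul_nonsing_inv _ ((isUnit_iff_isUnit_det A).1 hA.isUnit), one_mulVec]
  have hwAe : w ⬝ᵥ A *ᵥ e = 1 := by
    rw [dotProduct_mulVec, ← mulVec_transpose, ← conjTranspose_eq_transpose_of_trivial,
      hA.isHermitian.eq, hAw]
    simp [e]
  have key : 0 ≤ A a a * (A a a * A⁻¹ a a - 1) := by
    have := hA.posSemidef.dotProduct_mulVec_nonneg (A a a • w - e)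
    simp only [star_trivial, mulVec_sub, mulVec_smul, hAw, dotProduct_sub, sub_dotProduct,
      smul_dotProduct, dotProduct_smul, hwAe] at this
    simpa [e, w, mulVec_single, mul_sub, sq] using this
  exact le_of_sub_nonneg (nonneg_of_mul_nonneg_right key hA.diag_pos)

variable {A : Matrix ι ι ℝ} {α : ι → ℝ}

theorem apply_mul_le_one_of_mulVec_eq_one (hA : ∀ a b, 0 ≤ A a b) (hα : ∀ a, 0 ≤ α a)
    (hAα : A *ᵥ α = 1) (a : ι) : A a a * α a ≤ 1 :=
  calc A a a * α a ≤ ∑ b, A a b * α b :=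
        single_le_sum (fun b _ => mul_nonneg (hA a b) (hα b)) (mem_univ a)
    _ = 1 := congrFun hAα a

theorem apply_eq_zero_of_mulVec_eq_one (hA : ∀ a b, 0 ≤ A a b) (hα : ∀ a, 0 ≤ α a)
    (hAα : A *ᵥ α = 1) {a b : ι} (hab : a ≠ b) (ha : A a a * α a = 1) (hb : 0 < α b) :
    A a b = 0 := by
  have h : A a a * α a + A a b * α b ≤ 1 :=
    calc A a a * α a + A a b * α b ≤ ∑ c, A a c * α c :=
          add_le_sum (fun c _ => mul_nonneg (hA a c) (hα c)) (mem_univ a) (mem_univ b) hab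
      _ = 1 := congrFun hAα a
  have : A a b * α b ≤ 0 := by linarith
  exact le_antisymm (nonpos_of_mul_nonpos_left this hb) (hA a b)

variable [DecidableEq ι]

theorem PosDef.le_inv_apply_self_of_mulVec_eq_one (hApos : A.PosDef) (hA : ∀ a b, 0 ≤ A a b)
    (hα : ∀ a, 0 ≤ α a) (hAα : A *ᵥ α = 1) (a : ι) : α a ≤ A⁻¹ a a :=
  le_of_mul_le_mul_left
    ((apply_mul_le_one_of_mulVec_eq_one hA hα hAα a).trans (hApos.one_le_mul_inv_apply_self a))
    hApos.diag_pos

theorem PosDef.sum_le_trace_inv_of_mulVec_eq_one (hApos : A.PosDef) (hA : ∀ a b, 0 ≤ A a b)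
    (hα : ∀ a, 0 ≤ α a) (hAα : A *ᵥ α = 1) : ∑ a, α a ≤ A⁻¹.trace :=
  sum_le_sum fun a _ => hApos.le_inv_apply_self_of_mulVec_eq_one hA hα hAα a

theorem IsDiag.trace_inv_eq_sum_of_mulVec_eq_one (hdiag : A.IsDiag) (hAα : A *ᵥ α = 1) :
    A⁻¹.trace = ∑ a, α a := by
  rw [← hdiag.diagonal_diag] at hAα ⊢
  have h : (fun a => A.diag a * α a) = 1 :=
    funext fun a => by simpa [mulVec_diagonal] using congrFun hAα a
  rw [inv_eq_right_inv (B := diagonal α) (by rw [diagonal_mul_diagonal, h, diagonal_one']),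
    trace_diagonal]

theorem PosDef.trace_inv_eq_sum_iff_isDiag (hApos : A.PosDef) (hA : ∀ a b, 0 ≤ A a b)
    (hα : ∀ a, 0 ≤ α a) (hAα : A *ᵥ α = 1) : A⁻¹.trace = ∑ a, α a ↔ A.IsDiag := by
  refine ⟨fun htr a b hab => ?_, fun hdiag => hdiag.trace_inv_eq_sum_of_mulVec_eq_one hAα⟩
  have hle := hApos.le_inv_apply_self_of_mulVec_eq_one hA hα hAα
  have heq : ∀ c, α c = A⁻¹ c c :=
    fun c => (sum_eq_sum_iff_of_le fun c _ => hle c).1 htr.symm c (mem_univ c)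
  have hone : ∀ c, A c c * α c = 1 := fun c =>
    le_antisymm (apply_mul_le_one_of_mulVec_eq_one hA hα hAα c)
      (heq c ▸ hApos.one_le_mul_inv_apply_self c)
  have hpos : 0 < α b := pos_of_mul_pos_right (by rw [hone b]; exact one_pos) (hA b b)
  exact apply_eq_zero_of_mulVec_eq_one hA hα hAα hab (hone a) hpos

end Matrix

section StarGram

variable {X ι : Type*} [Fintype X]

noncomputable def starGram (μ : X → ℝ) (ν : ι → X → ℝ) : Matrix ι ι ℝ :=
  Matrix.of fun a b => ∑ x, ν a x * ν b x / μ x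

theorem starGram_eq_mul_diagonal_mul [DecidableEq X] (μ : X → ℝ) (ν : ι → X → ℝ) :
    starGram μ ν = Matrix.of ν * diagonal μ⁻¹ * (Matrix.of ν)ᵀ := by
  ext a b
  rw [mul_apply]
  simp_rw [mul_diagonal]
  simp [starGram, div_eq_mul_inv, mul_right_comm]

theorem posSemidef_starGram [Fintype ι] (μ : X → ℝ) (hμ : ∀ x, 0 ≤ μ x) (ν : ι → X → ℝ) :
    (starGram μ ν).PosSemidef := by
  classical
  rw [starGram_eq_mul_diagonal_mul, ← conjTranspose_eq_transpose_of_trivial]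
  exact (PosSemidef.diagonal fun x => inv_nonneg.2 (hμ x)).mul_mul_conjTranspose_same _

theorem starGram_nonneg {μ : X → ℝ} (hμ : ∀ x, 0 ≤ μ x) {ν : ι → X → ℝ}
    (hν : ∀ a x, 0 ≤ ν a x) (a b : ι) : 0 ≤ starGram μ ν a b :=
  sum_nonneg fun x _ => div_nonneg (mul_nonneg (hν a x) (hν b x)) (hμ x)

theorem starGram_mulVec_eq_one [Fintype ι] {μ : X → ℝ} (hμ : ∀ x, μ x ≠ 0) {ν : ι → X → ℝ}
    (hν : ∀ a, ∑ x, ν a x = 1) {α : ι → ℝ} (hμα : ∀ x, μ x = ∑ a, α a * ν a x) :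
    starGram μ ν *ᵥ α = 1 := by
  classical
  have hνα : (Matrix.of ν)ᵀ *ᵥ α = μ := funext fun x => by
    simp [mulVec, dotProduct, hμα, mul_comm]
  have hμμ : diagonal μ⁻¹ *ᵥ μ = 1 := funext fun x => by
    simp [mulVec_diagonal, hμ x]
  rw [starGram_eq_mul_diagonal_mul, ← mulVec_mulVec, ← mulVec_mulVec, hνα, hμμ]
  ext a
  simp [mulVec, dotProduct, hν]

end StarGram

theorem stmt1_general {X Xbar : Type*} [Fintype X] [Fintype Xbar] [DecidableEq Xbar]
    (μ : X → ℝ) (hμpos : ∀ x, 0 < μ x)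
    (ν : Xbar → X → ℝ) (hνnn : ∀ a x, 0 ≤ ν a x) (hνsum : ∀ a, ∑ x, ν a x = 1)
    (Γ : Matrix Xbar Xbar ℝ) (hΓ : ∀ a b, Γ a b = ∑ x, ν a x * ν b x / μ x)
    (hinv : IsUnit Γ.det)
    (α : Xbar → ℝ) (hαnn : ∀ a, 0 ≤ α a) (hαsum : ∑ a, α a = 1)
    (hconv : ∀ x, μ x = ∑ a, α a * ν a x) :
    1 ≤ Γ⁻¹.trace ∧
      (Γ⁻¹.trace = 1 ↔ ∀ a b, a ≠ b → ∑ x, ν a x * ν b x / μ x = 0) := by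
  obtain rfl : Γ = starGram μ ν := Matrix.ext hΓ
  have hpos : (starGram μ ν).PosDef :=
    (posSemidef_starGram μ (fun x => (hμpos x).le) ν).posDef_iff_isUnit.2
      ((isUnit_iff_isUnit_det _).2 hinv)
  have hnn := starGram_nonneg (fun x => (hμpos x).le) hνnn
  have hone := starGram_mulVec_eq_one (fun x => (hμpos x).ne') hνsum hconv
  rw [← hαsum]
  exact ⟨hpos.sum_le_trace_inv_of_mulVec_eq_one hnn hαnn hone,
    hpos.trace_inv_eq_sum_iff_isDiag hnn hαnn hone⟩

/-- If the Gram matrix `Γ` of a family of probability measures `ν` is invertible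
and `μ` is a convex combination of the `ν_a`, then `Trace(Γ⁻¹) ≥ 1`, with equality iff the
`ν_a` are pairwise orthogonal in `⟨·,·⟩*`. -/
theorem stmt1 {X Xbar : Type*} [Fintype X] [Fintype Xbar] [DecidableEq Xbar]
    (μ : X → ℝ) (hμpos : ∀ x, 0 < μ x) (hμsum : ∑ x, μ x = 1)
    (ν : Xbar → X → ℝ) (hνnn : ∀ a x, 0 ≤ ν a x) (hνsum : ∀ a, ∑ x, ν a x = 1)
    (Γ : Matrix Xbar Xbar ℝ) (hΓ : ∀ a b, Γ a b = ∑ x, ν a x * ν b x / μ x)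
    (hinv : IsUnit Γ.det)
    (α : Xbar → ℝ) (hαnn : ∀ a, 0 ≤ α a) (hαsum : ∑ a, α a = 1)
    (hconv : ∀ x, μ x = ∑ a, α a * ν a x) :
    1 ≤ Γ⁻¹.trace ∧
      (Γ⁻¹.trace = 1 ↔ ∀ a b, a ≠ b → ∑ x, ν a x * ν b x / μ x = 0) :=
  stmt1_general μ hμpos ν hνnn hνsum Γ hΓ hinv α hαnn hαsum hconv
end

section
/- For any real numbers 1 = θ_0 > θ_1 ≥ θ_2 ≥ … ≥ θ_{m-1} ≥ 0, there exists an irreducible stochastic m×m matrix P̄, reversible with respect to the probability measure μ̄ given by μ̄(k) = 1/(k(k+1)) for 1 ≤ k ≤ m−1 and μ̄(m) = 1/m, whose eigenvalues are exactly θ_0, θ_1, …, θ_{m-1}. -/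
open Finset Matrix

/-!
Let `A` be the Helmert matrix: row `j` consists of `j + 1` ones followed by `-(j + 1)` (the last
row is all ones). Its rows are orthogonal with squared lengths `1 / μ̄`, i.e. `A Aᵀ D_μ̄ = 1`.
Hence `P̄ = A D_θ Aᵀ D_μ̄` is similar to `D_θ`, and `D_μ̄ P̄ = D_μ̄ A D_θ Aᵀ D_μ̄` is symmetric.
The first column of `A` is `1`, so `Aᵀ D_μ̄ 1 = e₀` and `P̄ 1 = θ₀ A e₀ = 1`.
Off the diagonal (`j < k`) the entries of `A D_θ Aᵀ` are
`∑_{i ≤ j} (θ_i - θ_{j+1}) ≥ θ₀ - θ_{j+1} > 0`, on it they are at least `θ₀`,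
so `P̄` is entrywise positive and in particular irreducible.
-/

noncomputable def helmert (m : ℕ) : Matrix (Fin m) (Fin m) ℝ :=
  of fun j i => if i ≤ j then 1 else if (i : ℕ) = j + 1 then -((j : ℝ) + 1) else 0

noncomputable def mubar (m : ℕ) (k : Fin m) : ℝ :=
  if (k : ℕ) = m - 1 then (1 : ℝ) / m else 1 / (((k : ℕ) + 1) * ((k : ℕ) + 2))

lemma isSymm_mul_diagonal_mul_transpose {n α : Type*} [Fintype n] [DecidableEq n]
    [CommSemiring α] (A : Matrix n n α) (d : n → α) : (A * diagonal d * Aᵀ).IsSymm := by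
  simp only [IsSymm, transpose_mul, transpose_transpose, diagonal_transpose, Matrix.mul_assoc]

section Helmert

variable {m : ℕ}

lemma mubar_pos (k : Fin m) : 0 < mubar m k := by
  have : (0 : ℝ) < m := by exact_mod_cast k.pos
  unfold mubar
  split_ifs <;> positivity

lemma helmert_apply_of_le {j i : Fin m} (h : i ≤ j) : helmert m j i = 1 := if_pos h

lemma helmert_apply_of_val_eq_succ {j i : Fin m} (h : (i : ℕ) = j + 1) :
    helmert m j i = -((j : ℝ) + 1) := by
  simp only [helmert, of_apply, if_neg (show ¬i ≤ j by rw [Fin.le_def]; omega), if_pos h]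

lemma helmert_apply_of_succ_lt {j i : Fin m} (h : (j : ℕ) + 1 < i) : helmert m j i = 0 := by
  simp only [helmert, of_apply, if_neg (show ¬i ≤ j by rw [Fin.le_def]; omega),
    if_neg (show (i : ℕ) ≠ j + 1 by omega)]

lemma helmert_mul_helmert_of_lt {j k : Fin m} (hjk : j < k) (i : Fin m) :
    helmert m j i * helmert m k i = helmert m j i := by
  by_cases hik : i ≤ k
  · rw [helmert_apply_of_le hik, mul_one]
  · rw [Fin.lt_def] at hjk
    rw [Fin.le_def] at hik
    rw [helmert_apply_of_succ_lt (by omega), zero_mul]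

lemma sum_helmert_mul {j j' : Fin m} (hj' : (j' : ℕ) = j + 1) (g : Fin m → ℝ) :
    ∑ i, helmert m j i * g i = ∑ i ∈ Iic j, (g i - g j') := by
  have hj'_mem : j' ∈ (Iic j)ᶜ := by simp [Fin.lt_def, hj']
  rw [← sum_add_sum_compl (Iic j), sum_eq_single_of_mem j' hj'_mem, sum_sub_distrib, sum_const,
    Fin.card_Iic, helmert_apply_of_val_eq_succ hj', nsmul_eq_mul]
  · rw [sum_congr rfl fun i hi => by rw [helmert_apply_of_le (mem_Iic.mp hi), one_mul]]
    push_cast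
    ring
  · intro i hi hij'
    have : (j' : ℕ) ≠ i := fun h => hij' (Fin.ext h.symm)
    simp only [mem_compl, mem_Iic, not_le, Fin.lt_def] at hi
    rw [helmert_apply_of_succ_lt (by omega), zero_mul]

lemma sum_helmert_mul_helmert_of_lt {j k : Fin m} (hjk : j < k) :
    ∑ i, helmert m j i * helmert m k i = 0 := by
  have hj' : (j : ℕ) + 1 < m := by rw [Fin.lt_def] at hjk; omega
  have := sum_helmert_mul (j' := ⟨j + 1, hj'⟩) rfl 1
  simp only [Pi.one_apply, mul_one, sub_self, sum_const_zero] at this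
  simp only [helmert_mul_helmert_of_lt hjk, this]

lemma sum_helmert_mul_self (j : Fin m) : ∑ i, helmert m j i * helmert m j i = (mubar m j)⁻¹ := by
  by_cases hj : (j : ℕ) + 1 < m
  · rw [sum_helmert_mul (j' := ⟨j + 1, hj⟩) rfl, mubar, if_neg (by omega),
      sum_congr rfl fun i hi => by
        rw [helmert_apply_of_le (mem_Iic.mp hi), helmert_apply_of_val_eq_succ rfl],
      sum_const, Fin.card_Iic, nsmul_eq_mul]
    push_cast
    rw [one_div, inv_inv]
    ring
  · rw [sum_congr rfl fun i _ => by
        rw [helmert_apply_of_le (Fin.le_def.mpr (by omega : (i : ℕ) ≤ j)), one_mul],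
      sum_const, card_univ, Fintype.card_fin, nsmul_one, mubar, if_pos (by omega)]
    simp

lemma helmert_mul_transpose : helmert m * (helmert m)ᵀ = diagonal fun j => (mubar m j)⁻¹ := by
  ext j k
  rcases lt_trichotomy j k with hjk | rfl | hjk
  · simp only [mul_apply, transpose_apply, sum_helmert_mul_helmert_of_lt hjk,
      diagonal_apply_ne _ hjk.ne]
  · simp only [mul_apply, transpose_apply, sum_helmert_mul_self, diagonal_apply_eq]
  · rw [← (isSymm_mul_transpose_self (helmert m)).apply]
    simp only [mul_apply, transpose_apply, sum_helmert_mul_helmert_of_lt hjk,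
      diagonal_apply_ne _ hjk.ne']

lemma helmert_mul_transpose_mul_diagonal_mubar :
    helmert m * ((helmert m)ᵀ * diagonal (mubar m)) = 1 := by
  rw [← Matrix.mul_assoc, helmert_mul_transpose, diagonal_mul_diagonal, ← diagonal_one]
  exact congrArg diagonal (funext fun j => inv_mul_cancel₀ (mubar_pos j).ne')

lemma transpose_mul_diagonal_mubar_mul_helmert :
    (helmert m)ᵀ * diagonal (mubar m) * helmert m = 1 :=
  mul_eq_one_comm.mp helmert_mul_transpose_mul_diagonal_mubar

lemma helmert_mulVec_single_zero (hm : 0 < m) : helmert m *ᵥ Pi.single ⟨0, hm⟩ 1 = 1 := by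
  ext j
  rw [mulVec_single_one, col_apply, helmert_apply_of_le (Fin.le_def.mpr (Nat.zero_le _)),
    Pi.one_apply]

lemma helmert_mul_diagonal_mul_transpose_apply (f : Fin m → ℝ) (j k : Fin m) :
    (helmert m * diagonal f * (helmert m)ᵀ) j k = ∑ i, helmert m j i * f i * helmert m k i := by
  rw [mul_apply]
  simp only [mul_diagonal, transpose_apply]

lemma helmert_mul_diagonal_mul_transpose_apply_of_lt (f : Fin m → ℝ) {j j' k : Fin m}
    (hj' : (j' : ℕ) = j + 1) (hjk : j < k) :
    (helmert m * diagonal f * (helmert m)ᵀ) j k = ∑ i ∈ Iic j, (f i - f j') := by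
  rw [helmert_mul_diagonal_mul_transpose_apply, ← sum_helmert_mul hj']
  exact sum_congr rfl fun i _ => by rw [mul_right_comm, helmert_mul_helmert_of_lt hjk]

lemma le_helmert_mul_diagonal_mul_transpose_self (hm : 0 < m) {f : Fin m → ℝ} (hf : 0 ≤ f)
    (j : Fin m) : f ⟨0, hm⟩ ≤ (helmert m * diagonal f * (helmert m)ᵀ) j j := by
  have h0 : helmert m j ⟨0, hm⟩ = 1 := helmert_apply_of_le (Fin.le_def.mpr (Nat.zero_le _))
  rw [helmert_mul_diagonal_mul_transpose_apply]
  calc f ⟨0, hm⟩ = helmert m j ⟨0, hm⟩ * f ⟨0, hm⟩ * helmert m j ⟨0, hm⟩ := by simp [h0]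
    _ ≤ ∑ i, helmert m j i * f i * helmert m j i :=
      single_le_sum (f := fun i => helmert m j i * f i * helmert m j i)
        (fun i _ => by rw [mul_right_comm]; exact mul_nonneg (mul_self_nonneg _) (hf i))
        (mem_univ _)

lemma helmert_mul_diagonal_mul_transpose_pos (hm : 0 < m) {θ : Fin m → ℝ} (hθ : Antitone θ)
    (hθ_nonneg : 0 ≤ θ) (hθ_pos : 0 < θ ⟨0, hm⟩)
    (hθ_lt : ∀ j : Fin m, j ≠ ⟨0, hm⟩ → θ j < θ ⟨0, hm⟩) (j k : Fin m) :
    0 < (helmert m * diagonal θ * (helmert m)ᵀ) j k := by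
  suffices ∀ j k : Fin m, j < k → 0 < (helmert m * diagonal θ * (helmert m)ᵀ) j k by
    rcases lt_trichotomy j k with hjk | rfl | hjk
    · exact this j k hjk
    · exact hθ_pos.trans_le (le_helmert_mul_diagonal_mul_transpose_self hm hθ_nonneg j)
    · rw [← (isSymm_mul_diagonal_mul_transpose (helmert m) θ).apply]
      exact this k j hjk
  intro j k hjk
  have hj' : (j : ℕ) + 1 < m := by rw [Fin.lt_def] at hjk; omega
  rw [helmert_mul_diagonal_mul_transpose_apply_of_lt θ (j' := ⟨j + 1, hj'⟩) rfl hjk]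
  refine sum_pos' (fun i hi => sub_nonneg.mpr (hθ ?_)) ⟨⟨0, hm⟩, ?_, sub_pos.mpr (hθ_lt _ ?_)⟩
  · rw [mem_Iic, Fin.le_def] at hi
    exact Fin.le_def.mpr (Nat.le_succ_of_le hi)
  · simp [Fin.le_def]
  · simp [Fin.ext_iff]

noncomputable def helmertChain (θ : Fin m → ℝ) : Matrix (Fin m) (Fin m) ℝ :=
  helmert m * diagonal θ * (helmert m)ᵀ * diagonal (mubar m)

lemma helmertChain_apply (θ : Fin m → ℝ) (j k : Fin m) :
    helmertChain θ j k = (helmert m * diagonal θ * (helmert m)ᵀ) j k * mubar m k :=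
  mul_diagonal _ _ _ _

lemma charpoly_helmertChain (θ : Fin m → ℝ) :
    (helmertChain θ).charpoly = ∏ j, (Polynomial.X - Polynomial.C (θ j)) := by
  rw [helmertChain, Matrix.mul_assoc, charpoly_mul_comm, ← Matrix.mul_assoc,
    transpose_mul_diagonal_mubar_mul_helmert, Matrix.one_mul, charpoly_diagonal]

lemma helmertChain_mulVec_one (hm : 0 < m) {θ : Fin m → ℝ} (h0 : θ ⟨0, hm⟩ = 1) :
    helmertChain θ *ᵥ 1 = 1 := by
  have h : ((helmert m)ᵀ * diagonal (mubar m)) *ᵥ 1 = Pi.single ⟨0, hm⟩ 1 := by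
    rw [← helmert_mulVec_single_zero hm, mulVec_mulVec, transpose_mul_diagonal_mubar_mul_helmert,
      one_mulVec]
  rw [helmertChain, Matrix.mul_assoc (helmert m * diagonal θ), ← mulVec_mulVec, h,
    ← mulVec_mulVec, diagonal_mulVec_single, h0, mul_one, helmert_mulVec_single_zero]

lemma mubar_mul_helmertChain_comm (θ : Fin m → ℝ) (j k : Fin m) :
    mubar m j * helmertChain θ j k = mubar m k * helmertChain θ k j := by
  have h : diagonal (mubar m) * helmertChain θ
      = diagonal (mubar m) * helmert m * diagonal θ * (diagonal (mubar m) * helmert m)ᵀ := by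
    simp only [helmertChain, transpose_mul, diagonal_transpose, Matrix.mul_assoc]
  have := (isSymm_mul_diagonal_mul_transpose (diagonal (mubar m) * helmert m) θ).apply k j
  rwa [← h, diagonal_mul, diagonal_mul] at this

end Helmert

/-- for any `1 = θ 0 > θ 1 ≥ … ≥ θ (m-1) ≥ 0` there exists an irreducible
stochastic `m × m` matrix, reversible with respect to the probability measure
`μ̄(k) = 1/(k(k+1))` for `1 ≤ k ≤ m-1` and `μ̄(m) = 1/m` (indexed here by `k : Fin m`,
so `μ̄ k = 1/((k+1)(k+2))` for `k < m-1` and `μ̄ (m-1) = 1/m`), whose eigenvalues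
(i.e. the roots of its characteristic polynomial, with multiplicity) are exactly
`θ 0, …, θ (m-1)`. -/
theorem stmt6 {m : ℕ} (hm : 1 ≤ m) (θ : Fin m → ℝ)
    (h0 : θ ⟨0, hm⟩ = 1) (hdec : Antitone θ) (hnn : ∀ j, 0 ≤ θ j)
    (hlt : ∀ j : Fin m, j ≠ ⟨0, hm⟩ → θ j < 1) :
    ∃ Pbar : Matrix (Fin m) (Fin m) ℝ,
      (∀ j k, 0 ≤ Pbar j k) ∧ (∀ j, ∑ k, Pbar j k = 1) ∧
      (∀ j k, ∃ l, 0 < (Pbar ^ l) j k) ∧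
      (∀ j k : Fin m,
        (if (j : ℕ) = m - 1 then (1 : ℝ) / m else 1 / (((j : ℕ) + 1) * ((j : ℕ) + 2)))
            * Pbar j k =
          (if (k : ℕ) = m - 1 then (1 : ℝ) / m else 1 / (((k : ℕ) + 1) * ((k : ℕ) + 2)))
            * Pbar k j) ∧
      Pbar.charpoly = ∏ j, (Polynomial.X - Polynomial.C (θ j)) := by
  have hpos : ∀ j k, 0 < helmertChain θ j k := fun j k => by
    rw [helmertChain_apply]
    exact mul_pos (helmert_mul_diagonal_mul_transpose_pos hm hdec hnn (h0 ▸ one_pos)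
      (h0 ▸ hlt) j k) (mubar_pos k)
  refine ⟨helmertChain θ, fun j k => (hpos j k).le, fun j => ?_,
    fun j k => ⟨1, by simpa using hpos j k⟩, mubar_mul_helmertChain_comm θ,
    charpoly_helmertChain θ⟩
  simpa [mulVec, dotProduct] using congrFun (helmertChain_mulVec_one hm h0) j
end

section
/- Let P be a stochastic matrix on a finite set X, Λ an m×n stochastic matrix with rows ν_x̄, and P̄ a stochastic matrix on X̄ with ΛP = P̄Λ. Let X̂ be the discrete-time chain with kernel P started from ν_x̄. Define a randomized stopping time T by: at each time t ≥ 1, given the past and X̂(t) = y, stop with probability 1 − P̄(x̄,x̄)ν_x̄(y)/(ν_x̄P)(y). Then (i) this stopping probability is well defined (lies in [0,1]), (ii) T is geometric with parameter 1 − P̄(x̄,x̄), and (iii) ν_x̄ is stationary up to T: for all t ≥ 0, P_{ν_x̄}(X̂(t) = · | t < T) = ν_x̄. -/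
/-!
Comparing the `c = b` term of the intertwining relation `ν_b P = ∑_c P̄(b,c) ν_c` gives
`P̄(b,b) ν_b ≤ ν_b P` coordinatewise, so the survival factor `P̄(b,b) ν_b(y) / (ν_b P)(y)` lies in
`[0,1]`. If the surviving mass at time `t` is `s ν_b`, one step of `P` gives `s (ν_b P)`, and
thinning by that factor leaves exactly `s P̄(b,b) ν_b`. Hence the surviving mass at time `t` is
`P̄(b,b)^t ν_b`: its total is `P̄(b,b)^t` and its normalisation is `ν_b`.
-/

open Finset

lemma diag_mul_le_sum_of_intertwining {X Xbar : Type*} [Fintype X] [Fintype Xbar]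
    (P : Matrix X X ℝ) (ν : Xbar → X → ℝ) (hνnn : ∀ a x, 0 ≤ ν a x)
    (Pbar : Matrix Xbar Xbar ℝ) (hPbnn : ∀ a c, 0 ≤ Pbar a c)
    (hint : ∀ a y, ∑ x, ν a x * P x y = ∑ c, Pbar a c * ν c y) (b : Xbar) (y : X) :
    Pbar b b * ν b y ≤ ∑ x, ν b x * P x y := by
  rw [hint b y]
  exact single_le_sum (f := fun c => Pbar b c * ν c y)
    (fun c _ => mul_nonneg (hPbnn b c) (hνnn c y)) (mem_univ b)

section Thinning

variable {X : Type*} [Fintype X] (P : Matrix X X ℝ) (μ : X → ℝ) (c : ℝ)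

lemma sum_smul_mul_thinning_eq {y : X} (hle : c * μ y ≤ ∑ x, μ x * P x y)
    (hnn : 0 ≤ c * μ y) (s : ℝ) :
    (∑ x, s * μ x * P x y) * (c * μ y / ∑ x, μ x * P x y) = s * c * μ y := by
  have hpush : ∑ x, s * μ x * P x y = s * ∑ x, μ x * P x y := by
    simp only [mul_sum, mul_assoc]
  rw [hpush]
  -- Where `(μ P)(y) = 0` the division is junk, but then `c μ(y) = 0` as well.
  by_cases h0 : ∑ x, μ x * P x y = 0
  · have hzero : c * μ y = 0 := le_antisymm (h0 ▸ hle) hnn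
    rw [h0, mul_assoc s c, hzero]
    simp
  · field_simp

lemma eq_pow_mul_of_thinning_recursion (hle : ∀ y, c * μ y ≤ ∑ x, μ x * P x y)
    (hnn : ∀ y, 0 ≤ c * μ y) (σ : ℕ → X → ℝ) (hσ0 : σ 0 = μ)
    (hσ : ∀ t y, σ (t + 1) y = (∑ x, σ t x * P x y) * (c * μ y / ∑ x, μ x * P x y)) :
    ∀ t y, σ t y = c ^ t * μ y := by
  intro t
  induction t with
  | zero => simp [hσ0]
  | succ t ih =>
    intro y
    simp only [hσ t y, ih, sum_smul_mul_thinning_eq P μ c (hle y) (hnn y), pow_succ]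

end Thinning

theorem stmt16_general {X Xbar : Type*} [Fintype X] [Fintype Xbar]
    (P : Matrix X X ℝ)
    (ν : Xbar → X → ℝ) (hνnn : ∀ a x, 0 ≤ ν a x) (hνsum : ∀ a, ∑ x, ν a x = 1)
    (Pbar : Matrix Xbar Xbar ℝ) (hPbnn : ∀ a c, 0 ≤ Pbar a c)
    (hint : ∀ a y, ∑ x, ν a x * P x y = ∑ c, Pbar a c * ν c y)
    (b : Xbar)
    (σ : ℕ → X → ℝ) (hσ0 : σ 0 = ν b)
    (hσ : ∀ t y, σ (t + 1) y =
      (∑ x, σ t x * P x y) * (Pbar b b * ν b y / ∑ x, ν b x * P x y)) :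
    (∀ y, Pbar b b * ν b y ≤ ∑ x, ν b x * P x y) ∧
    (∀ t, ∑ y, σ t y = Pbar b b ^ t) ∧
    (∀ t, (∑ y, σ t y) ≠ 0 → ∀ y, σ t y / (∑ y', σ t y') = ν b y) := by
  have hbound := diag_mul_le_sum_of_intertwining P ν hνnn Pbar hPbnn hint b
  have hσ_eq : ∀ t y, σ t y = Pbar b b ^ t * ν b y :=
    eq_pow_mul_of_thinning_recursion P (ν b) (Pbar b b) hbound
      (fun y => mul_nonneg (hPbnn b b) (hνnn b y)) σ hσ0 hσ
  have hsum : ∀ t, ∑ y, σ t y = Pbar b b ^ t := fun t => by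
    simp only [hσ_eq, ← mul_sum, hνsum b, mul_one]
  refine ⟨hbound, hsum, fun t ht y => ?_⟩
  rw [hsum t] at ht ⊢
  rw [hσ_eq t y, mul_div_cancel_left₀ _ ht]

/-- Diaconis–Fill stopping construction. Given `ΛP = P̄Λ` (rows `ν a`),
start the chain from `ν b` and, at each time `t ≥ 1`, on `X̂(t) = y` stop with probability
`1 − P̄(b,b) ν_b(y)/(ν_b P)(y)`. Encoding the unnormalized surviving law
`σ t y = P(T > t, X̂(t) = y)` by its recursion, we have: (i) the stopping probabilities are
well defined (`P̄(b,b) ν_b(y) ≤ (ν_b P)(y)`, so they lie in `[0,1]`); (ii) `T` is geometric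
with parameter `1 − P̄(b,b)`, i.e. `P(T > t) = P̄(b,b)^t`; (iii) `ν_b` is stationary up to
`T`: `P(X̂(t) = · | t < T) = ν_b`. -/
theorem stmt16 {X Xbar : Type*} [Fintype X] [Fintype Xbar]
    (P : Matrix X X ℝ) (hPnn : ∀ x y, 0 ≤ P x y) (hProw : ∀ x, ∑ y, P x y = 1)
    (ν : Xbar → X → ℝ) (hνnn : ∀ a x, 0 ≤ ν a x) (hνsum : ∀ a, ∑ x, ν a x = 1)
    (Pbar : Matrix Xbar Xbar ℝ) (hPbnn : ∀ a c, 0 ≤ Pbar a c)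
    (hPbrow : ∀ a, ∑ c, Pbar a c = 1)
    (hint : ∀ a y, ∑ x, ν a x * P x y = ∑ c, Pbar a c * ν c y)
    (b : Xbar)
    (σ : ℕ → X → ℝ) (hσ0 : σ 0 = ν b)
    (hσ : ∀ t y, σ (t + 1) y =
      (∑ x, σ t x * P x y) * (Pbar b b * ν b y / ∑ x, ν b x * P x y)) :
    (∀ y, Pbar b b * ν b y ≤ ∑ x, ν b x * P x y) ∧
    (∀ t, ∑ y, σ t y = Pbar b b ^ t) ∧
    (∀ t, (∑ y, σ t y) ≠ 0 → ∀ y, σ t y / (∑ y', σ t y') = ν b y) :=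
  stmt16_general P ν hνnn hνsum Pbar hPbnn hint b σ hσ0 hσ
end

section
/- With the setting of the Diaconis–Fill construction (ΛP = P̄Λ, randomized stopping time T = T_x̄ and mark Ȳ_x̄ as constructed), conditionally on stopping at time 1 with X̂(1) = y, the probability that the mark equals ȳ ≠ x̄ is P̄(x̄,ȳ)ν_ȳ(y) / ((ν_x̄P)(y) − P̄(x̄,x̄)ν_x̄(y)); consequently P_{ν_x̄}(X̂(T) = · | Ȳ_x̄ = ȳ) = ν_ȳ(·) and P_{ν_x̄}(Ȳ_x̄ = ȳ) = P̄(x̄,ȳ)/(1 − P̄(x̄,x̄)). -/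
/-!
Summing the intertwining relation `ν_b P = ∑_c P̄(b,c) ν_c` over `c ≠ b` shows that the stopping
weight `D(y)` is exactly the total mark weight `∑_{c ≠ b} P̄(b,c) ν_c(y)`, so the marks are well
defined and the joint law of stopping at time `t + 1` with mark `c` at `y` is `P̄(b,b)^t P̄(b,c) ν_c(y)`.
This factorizes into a geometric law in `t` times `P̄(b,c) ν_c(y)`, and summing the geometric
series gives the remaining claims.
-/

open Finset

theorem Finset.mul_div_sum_cancel_of_nonneg {ι K : Type*} [Semifield K] [PartialOrder K]
    [AddLeftMono K] {s : Finset ι} {f : ι → K} (hf : ∀ i ∈ s, 0 ≤ f i) {i : ι} (hi : i ∈ s) :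
    (∑ j ∈ s, f j) * (f i / ∑ j ∈ s, f j) = f i :=
  mul_div_cancel_of_imp' fun h => (sum_eq_zero_iff_of_nonneg hf).1 h i hi

theorem tsum_geometric_mul_of_lt_one {r : ℝ} (h₀ : 0 ≤ r) (h₁ : r < 1) (a : ℝ) :
    ∑' n : ℕ, r ^ n * a = a / (1 - r) := by
  rw [tsum_mul_right, tsum_geometric_of_lt_one h₀ h₁, div_eq_inv_mul]

theorem sum_erase_mul_eq_sub_of_intertwining {X Xbar : Type*} [Fintype X] [Fintype Xbar]
    [DecidableEq Xbar] {P : Matrix X X ℝ} {ν : Xbar → X → ℝ} {Pbar : Matrix Xbar Xbar ℝ}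
    (hint : ∀ a y, ∑ x, ν a x * P x y = ∑ c, Pbar a c * ν c y) (b : Xbar) (y : X) :
    ∑ c ∈ univ.erase b, Pbar b c * ν c y = ∑ x, ν b x * P x y - Pbar b b * ν b y := by
  rw [sum_erase_eq_sub (mem_univ b), hint]

theorem stmt17_general {X Xbar : Type*} [Fintype X] [Fintype Xbar] [DecidableEq Xbar]
    (P : Matrix X X ℝ)
    (ν : Xbar → X → ℝ) (hνnn : ∀ a x, 0 ≤ ν a x) (hνsum : ∀ a, ∑ x, ν a x = 1)
    (Pbar : Matrix Xbar Xbar ℝ) (hPbnn : ∀ a c, 0 ≤ Pbar a c)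
    (hint : ∀ a y, ∑ x, ν a x * P x y = ∑ c, Pbar a c * ν c y)
    (b : Xbar) (hb : Pbar b b < 1)
    (D : X → ℝ) (hD : ∀ y, D y = (∑ x, ν b x * P x y) - Pbar b b * ν b y)
    (J : ℕ → Xbar → X → ℝ)
    (hJ : ∀ t c y, J t c y = Pbar b b ^ t * (D y * (Pbar b c * ν c y / D y))) :
    (∀ y, ∑ c ∈ Finset.univ.erase b, Pbar b c * ν c y = D y) ∧
    (∀ c, c ≠ b → ∀ y, (∑' t : ℕ, J t c y) = Pbar b c / (1 - Pbar b b) * ν c y) ∧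
    (∀ c, c ≠ b → (∑' t : ℕ, ∑ y, J t c y) = Pbar b c / (1 - Pbar b b)) ∧
    (∀ c, c ≠ b → Pbar b c ≠ 0 →
      ∀ y, (∑' t : ℕ, J t c y) / (∑' t : ℕ, ∑ y', J t c y') = ν c y) ∧
    (∀ t : ℕ, ∀ c, c ≠ b → ∀ y,
      J t c y = (Pbar b b ^ t * (1 - Pbar b b)) * ∑' s : ℕ, J s c y) := by
  have hb₀ : 0 ≤ Pbar b b := hPbnn b b
  have hb₁ : 1 - Pbar b b ≠ 0 := by linarith
  have hmark : ∀ y, ∑ c ∈ univ.erase b, Pbar b c * ν c y = D y := fun y => by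
    rw [hD, sum_erase_mul_eq_sub_of_intertwining hint]
  have hJ_eq : ∀ t c, c ≠ b → ∀ y, J t c y = Pbar b b ^ t * (Pbar b c * ν c y) := by
    intro t c hc y
    rw [hJ, ← hmark y, mul_div_sum_cancel_of_nonneg
      (fun c _ => mul_nonneg (hPbnn b c) (hνnn c y)) (mem_erase.2 ⟨hc, mem_univ c⟩)]
  have hjoint : ∀ c, c ≠ b → ∀ y, ∑' t, J t c y = Pbar b c / (1 - Pbar b b) * ν c y := by
    intro c hc y
    rw [tsum_congr (hJ_eq · c hc y), tsum_geometric_mul_of_lt_one hb₀ hb, div_mul_eq_mul_div]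
  have hmarginal : ∀ c, c ≠ b → ∑' t, ∑ y, J t c y = Pbar b c / (1 - Pbar b b) := by
    intro c hc
    simp only [hJ_eq _ c hc, ← mul_sum, hνsum, mul_one]
    exact tsum_geometric_mul_of_lt_one hb₀ hb _
  refine ⟨hmark, hjoint, hmarginal, fun c hc hc₀ y => ?_, fun t c hc y => ?_⟩
  · rw [hjoint c hc y, hmarginal c hc, mul_div_cancel_left₀ _ (div_ne_zero hc₀ hb₁)]
  · rw [hjoint c hc y, hJ_eq t c hc y]
    field_simp

/-- Diaconis–Fill construction with marks. With `ΛP = P̄Λ`, start from `ν b`,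
stop at each step on state `y` with probability `1 − P̄(b,b)ν_b(y)/(ν_bP)(y)` and, upon
stopping at `y`, choose the mark `c ≠ b` with probability `P̄(b,c)ν_c(y)/D(y)` where
`D(y) = (ν_bP)(y) − P̄(b,b)ν_b(y)`. Encoding the joint law
`J t c y = P(T = t+1, Ȳ = c, X̂(T) = y)`: (i) the mark probabilities are well defined
(`∑_{c≠b} P̄(b,c)ν_c(y) = D(y)`); (ii) `P(Ȳ = c, X̂(T) = y) = (P̄(b,c)/(1−P̄(b,b)))ν_c(y)`;
(iii) `P(Ȳ = c) = P̄(b,c)/(1−P̄(b,b))`; (iv) `P(X̂(T) = · | Ȳ = c) = ν_c`; and (v) `(Ȳ, X̂(T))`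
is independent of `T`: the joint law factorizes as `P(T = t+1)·P(Ȳ = c, X̂(T) = y)`. -/
theorem stmt17 {X Xbar : Type*} [Fintype X] [Fintype Xbar] [DecidableEq Xbar]
    (P : Matrix X X ℝ) (hPnn : ∀ x y, 0 ≤ P x y) (hProw : ∀ x, ∑ y, P x y = 1)
    (ν : Xbar → X → ℝ) (hνnn : ∀ a x, 0 ≤ ν a x) (hνsum : ∀ a, ∑ x, ν a x = 1)
    (Pbar : Matrix Xbar Xbar ℝ) (hPbnn : ∀ a c, 0 ≤ Pbar a c)
    (hPbrow : ∀ a, ∑ c, Pbar a c = 1)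
    (hint : ∀ a y, ∑ x, ν a x * P x y = ∑ c, Pbar a c * ν c y)
    (b : Xbar) (hb : Pbar b b < 1)
    (D : X → ℝ) (hD : ∀ y, D y = (∑ x, ν b x * P x y) - Pbar b b * ν b y)
    (J : ℕ → Xbar → X → ℝ)
    (hJ : ∀ t c y, J t c y = Pbar b b ^ t * (D y * (Pbar b c * ν c y / D y))) :
    (∀ y, ∑ c ∈ Finset.univ.erase b, Pbar b c * ν c y = D y) ∧
    (∀ c, c ≠ b → ∀ y, (∑' t : ℕ, J t c y) = Pbar b c / (1 - Pbar b b) * ν c y) ∧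
    (∀ c, c ≠ b → (∑' t : ℕ, ∑ y, J t c y) = Pbar b c / (1 - Pbar b b)) ∧
    (∀ c, c ≠ b → Pbar b c ≠ 0 →
      ∀ y, (∑' t : ℕ, J t c y) / (∑' t : ℕ, ∑ y', J t c y') = ν c y) ∧
    (∀ t : ℕ, ∀ c, c ≠ b → ∀ y,
      J t c y = (Pbar b b ^ t * (1 - Pbar b b)) * ∑' s : ℕ, J s c y) :=
  stmt17_general P ν hνnn hνsum Pbar hPbnn hint b hb D hD J hJ
end
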